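/- arXiv:2108.03416 — 11 statements merged into one kernel-verified Lean document; each statement's English description precedes it below -/
import Mathlib

section
/- The preorder P^∃(A) has binary infima: given (h₁ : A₁ → A, α₁) and (h₂ : A₂ → A, α₂), choosing a pullback A₁ ×_A A₂ with projections p₁, p₂, the pair (h₁∘p₁ : A₁ ×_A A₂ → A, P_{p₁}(α₁) ∧ P_{p₂}(α₂)) is a greatest lower bound of the two elements in the preorder P^∃(A). -/
open CategoryTheory Limits

universe w v u

/-- A primary doctrine: a contravariant assignment of inf-semilattices with top
to objects of `C`, functorial and meet/top-preserving on morphisms. -/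
structure PrimaryDoctrine (C : Type u) [Category.{v} C] where
  P : C → Type w
  [instInf : ∀ A, SemilatticeInf (P A)]
  [instTop : ∀ A, OrderTop (P A)]
  map : ∀ {A B : C}, (A ⟶ B) → P B → P A
  map_id : ∀ (A : C) (α : P A), map (𝟙 A) α = α
  map_comp : ∀ {A B D : C} (f : A ⟶ B) (g : B ⟶ D) (α : P D),
    map (f ≫ g) α = map f (map g α)
  map_mono : ∀ {A B : C} (f : A ⟶ B), Monotone (map f)
  map_top : ∀ {A B : C} (f : A ⟶ B), map f ⊤ = ⊤
  map_inf : ∀ {A B : C} (f : A ⟶ B) (α β : P B), map f (α ⊓ β) = map f α ⊓ map f β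

attribute [instance] PrimaryDoctrine.instInf PrimaryDoctrine.instTop

/-- A class `Λ` of morphisms containing identities, closed under composition,
and closed under (chosen) pullbacks along arbitrary morphisms. -/
structure LambdaClass (C : Type u) [Category.{v} C] where
  mem : ∀ {X Y : C}, (X ⟶ Y) → Prop
  id_mem : ∀ X : C, mem (𝟙 X)
  comp_mem : ∀ {X Y Z : C} {f : X ⟶ Y} {g : Y ⟶ Z}, mem f → mem g → mem (f ≫ g)
  pbObj : ∀ {X Y Z : C} (g : X ⟶ Z), mem g → ∀ _f : Y ⟶ Z, C
  pbFst : ∀ {X Y Z : C} (g : X ⟶ Z) (hg : mem g) (f : Y ⟶ Z), pbObj g hg f ⟶ X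
  pbSnd : ∀ {X Y Z : C} (g : X ⟶ Z) (hg : mem g) (f : Y ⟶ Z), pbObj g hg f ⟶ Y
  isPB : ∀ {X Y Z : C} (g : X ⟶ Z) (hg : mem g) (f : Y ⟶ Z),
    IsPullback (pbFst g hg f) (pbSnd g hg f) g f
  pbSnd_mem : ∀ {X Y Z : C} (g : X ⟶ Z) (hg : mem g) (f : Y ⟶ Z), mem (pbSnd g hg f)

variable {C : Type u} [Category.{v} C]

/-- An element of the fibre `P^∃(A)` of the existential completion:
a pair of a morphism `g : B ⟶ A` in `Λ` and `α ∈ P(B)`. -/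
structure ExEl (P : PrimaryDoctrine C) (L : LambdaClass C) (A : C) where
  B : C
  g : B ⟶ A
  hg : L.mem g
  α : P.P B

variable {P : PrimaryDoctrine C} {L : LambdaClass C}

/-- The preorder on `P^∃(A)`. -/
def ExLe {A : C} (x y : ExEl P L A) : Prop :=
  ∃ w : x.B ⟶ y.B, w ≫ y.g = x.g ∧ x.α ≤ P.map w y.α

/-- Equivalence in the preorder `P^∃(A)`. -/
def ExEquiv {A : C} (x y : ExEl P L A) : Prop := ExLe x y ∧ ExLe y x

/-- The top element `(id_A, ⊤_A)` of `P^∃(A)`. -/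
def topE (P : PrimaryDoctrine C) (L : LambdaClass C) (A : C) : ExEl P L A :=
  ⟨A, 𝟙 A, L.id_mem A, ⊤⟩

/-- Reindexing `P^∃_f` along `f : A ⟶ B`, via the chosen pullback. -/
def reindex {A B : C} (f : A ⟶ B) (y : ExEl P L B) : ExEl P L A :=
  ⟨L.pbObj y.g y.hg f, L.pbSnd y.g y.hg f, L.pbSnd_mem y.g y.hg f,
   P.map (L.pbFst y.g y.hg f) y.α⟩

/-- Binary infimum in `P^∃(A)`, constructed via the chosen pullback. -/
def infE {A : C} (x y : ExEl P L A) : ExEl P L A :=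
  ⟨L.pbObj x.g x.hg y.g, L.pbFst x.g x.hg y.g ≫ x.g,
   (by rw [(L.isPB x.g x.hg y.g).w]
       exact L.comp_mem (L.pbSnd_mem x.g x.hg y.g) y.hg),
   P.map (L.pbFst x.g x.hg y.g) x.α ⊓ P.map (L.pbSnd x.g x.hg y.g) y.α⟩

/-- The left adjoint `∃^e_f` along `f ∈ Λ`, given by post-composition. -/
def existE {A B : C} (f : A ⟶ B) (hf : L.mem f) (x : ExEl P L A) : ExEl P L B :=
  ⟨x.B, x.g ≫ f, L.comp_mem x.hg hf, x.α⟩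

/-- The unit `ι_A : P(A) → P^∃(A)`, `α ↦ (id_A, α)`. -/
def iota (P : PrimaryDoctrine C) (L : LambdaClass C) (A : C) (α : P.P A) : ExEl P L A :=
  ⟨A, 𝟙 A, L.id_mem A, α⟩

/-- Given a pullback of `x₁.g` and `x₂.g`, the pair
`(h₁ ∘ p₁, P_{p₁}(α₁) ⊓ P_{p₂}(α₂))` is a greatest lower bound of `x₁, x₂`
in the preorder `P^∃(A)`. -/
theorem inf_of_existential_completion {A : C} (x₁ x₂ : ExEl P L A)
    (Q : C) (p₁ : Q ⟶ x₁.B) (p₂ : Q ⟶ x₂.B)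
    (hpb : IsPullback p₁ p₂ x₁.g x₂.g) (hm : L.mem (p₁ ≫ x₁.g)) :
    ExLe (⟨Q, p₁ ≫ x₁.g, hm, P.map p₁ x₁.α ⊓ P.map p₂ x₂.α⟩ : ExEl P L A) x₁ ∧
    ExLe (⟨Q, p₁ ≫ x₁.g, hm, P.map p₁ x₁.α ⊓ P.map p₂ x₂.α⟩ : ExEl P L A) x₂ ∧
    ∀ z : ExEl P L A, ExLe z x₁ → ExLe z x₂ →
      ExLe z ⟨Q, p₁ ≫ x₁.g, hm, P.map p₁ x₁.α ⊓ P.map p₂ x₂.α⟩ := by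
  refine ⟨⟨p₁, rfl, inf_le_left⟩, ⟨p₂, hpb.w.symm, inf_le_right⟩, ?_⟩
  rintro z ⟨w₁, hw₁, hα₁⟩ ⟨w₂, hw₂, hα₂⟩
  refine ⟨hpb.lift w₁ w₂ (hw₁.trans hw₂.symm), ?_, ?_⟩
  · rw [← Category.assoc, hpb.lift_fst, hw₁]
  · rw [P.map_inf]; refine le_inf ?_ ?_
    · calc z.α ≤ P.map w₁ x₁.α := hα₁
        _ = P.map (hpb.lift w₁ w₂ (hw₁.trans hw₂.symm) ≫ p₁) x₁.α := by rw [hpb.lift_fst]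
        _ = _ := P.map_comp _ _ _
    · calc z.α ≤ P.map w₂ x₂.α := hα₂
        _ = P.map (hpb.lift w₁ w₂ (hw₁.trans hw₂.symm) ≫ p₂) x₂.α := by rw [hpb.lift_snd]
        _ = _ := P.map_comp _ _ _
end

section
/- For each morphism f : A → B of C, the reindexing P^∃_f sending (g : C → B in Λ, β) to (the pullback projection g* f ∈ Λ over A, P_{f* g}(β)) is monotone: if (g₁, α₁) ≤ (g₂, α₂) in P^∃(B) then P^∃_f(g₁, α₁) ≤ P^∃_f(g₂, α₂) in P^∃(A). -/
open CategoryTheory Limits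

universe w v u

variable {C : Type u} [Category.{v} C]

variable {P : PrimaryDoctrine C} {L : LambdaClass C}

/-- Reindexing `P^∃_f` (via any pullbacks) is monotone. -/
theorem reindex_monotone {A B : C} (f : A ⟶ B) (y₁ y₂ : ExEl P L B)
    (D₁ : C) (p₁ : D₁ ⟶ y₁.B) (q₁ : D₁ ⟶ A)
    (h₁ : IsPullback p₁ q₁ y₁.g f) (hq₁ : L.mem q₁)
    (D₂ : C) (p₂ : D₂ ⟶ y₂.B) (q₂ : D₂ ⟶ A)
    (h₂ : IsPullback p₂ q₂ y₂.g f) (hq₂ : L.mem q₂)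
    (hle : ExLe y₁ y₂) :
    ExLe (⟨D₁, q₁, hq₁, P.map p₁ y₁.α⟩ : ExEl P L A)
      ⟨D₂, q₂, hq₂, P.map p₂ y₂.α⟩ := by
  obtain ⟨w, hw, hα⟩ := hle
  have hcomm : (p₁ ≫ w) ≫ y₂.g = q₁ ≫ f := by
    rw [Category.assoc, hw, h₁.w]
  refine ⟨h₂.lift (p₁ ≫ w) q₁ hcomm, h₂.lift_snd _ _ _, ?_⟩
  calc P.map p₁ y₁.α ≤ P.map p₁ (P.map w y₂.α) := P.map_mono p₁ hα
    _ = P.map (h₂.lift (p₁ ≫ w) q₁ hcomm) (P.map p₂ y₂.α) := by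
        rw [← P.map_comp, ← P.map_comp, h₂.lift_fst]
end

section
/- Reindexing in the existential completion preserves binary infima: for every morphism f : A → B of C and all elements x, y of P^∃(B), P^∃_f(x ∧ y) is equivalent to P^∃_f(x) ∧ P^∃_f(y) in P^∃(A), and P^∃_f preserves the top element. -/
open CategoryTheory Limits

universe w v u

variable {C : Type u} [Category.{v} C]

variable {P : PrimaryDoctrine C} {L : LambdaClass C}

/-!
In the preorder `P^∃(A)`, `infE x y` is a meet and `topE` is a top element, by the universal
property of the pullback defining `infE`. Likewise, `z ≤ P^∃_f y` holds exactly when `z` maps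
to `y` over `f`. So `P^∃_f` behaves like a right adjoint, and it preserves meets and the top
element formally.
-/

/-- `z ≤ P^∃_f y`, stated without forming the pullback; for `f = 𝟙 A` this is `ExLe`. -/
def ExLeOver {A B : C} (f : A ⟶ B) (z : ExEl P L A) (y : ExEl P L B) : Prop :=
  ∃ w : z.B ⟶ y.B, w ≫ y.g = z.g ≫ f ∧ z.α ≤ P.map w y.α

section ExistentialCompletion

variable {A B : C}

theorem exLe_iff_exLeOver_id {z x : ExEl P L A} : ExLe z x ↔ ExLeOver (𝟙 A) z x := by
  simp only [ExLe, ExLeOver, Category.comp_id]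

theorem ExLe.trans_exLeOver {f : A ⟶ B} {z z' : ExEl P L A} {y : ExEl P L B} :
    ExLe z z' → ExLeOver f z' y → ExLeOver f z y := by
  rintro ⟨u, hu, hα⟩ ⟨v, hv, hβ⟩
  refine ⟨u ≫ v, by rw [Category.assoc, hv, ← Category.assoc, hu], hα.trans ?_⟩
  rw [P.map_comp]
  exact P.map_mono u hβ

theorem ExLeOver.trans_exLe {f : A ⟶ B} {z : ExEl P L A} {x y : ExEl P L B} :
    ExLeOver f z x → ExLe x y → ExLeOver f z y := by
  rintro ⟨u, hu, hα⟩ ⟨v, hv, hβ⟩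
  refine ⟨u ≫ v, by rw [Category.assoc, hv, hu], hα.trans ?_⟩
  rw [P.map_comp]
  exact P.map_mono u hβ

theorem exLeOver_topE (f : A ⟶ B) (z : ExEl P L A) : ExLeOver f z (topE P L B) :=
  ⟨z.g ≫ f, Category.comp_id _, (P.map_top _).symm ▸ le_top⟩

theorem exLe_topE (z : ExEl P L A) : ExLe z (topE P L A) :=
  exLe_iff_exLeOver_id.2 (exLeOver_topE _ z)

theorem exLeOver_infE {f : A ⟶ B} {z : ExEl P L A} {x y : ExEl P L B} (hx : ExLeOver f z x)
    (hy : ExLeOver f z y) : ExLeOver f z (infE x y) := by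
  obtain ⟨u, hu, hα⟩ := hx
  obtain ⟨v, hv, hβ⟩ := hy
  have hpb := L.isPB x.g x.hg y.g
  have huv : u ≫ x.g = v ≫ y.g := hu.trans hv.symm
  refine ⟨hpb.lift u v huv, by dsimp only [infE]; rw [hpb.lift_fst_assoc, hu], ?_⟩
  dsimp only [infE]
  rw [P.map_inf, ← P.map_comp, ← P.map_comp, hpb.lift_fst, hpb.lift_snd]
  exact le_inf hα hβ

theorem exLe_infE {z x y : ExEl P L A} (hx : ExLe z x) (hy : ExLe z y) : ExLe z (infE x y) := by
  rw [exLe_iff_exLeOver_id] at *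
  exact exLeOver_infE hx hy

theorem infE_exLe_left (x y : ExEl P L A) : ExLe (infE x y) x :=
  ⟨L.pbFst x.g x.hg y.g, rfl, inf_le_left⟩

theorem infE_exLe_right (x y : ExEl P L A) : ExLe (infE x y) y :=
  ⟨L.pbSnd x.g x.hg y.g, (L.isPB x.g x.hg y.g).w.symm, inf_le_right⟩

theorem reindex_exLeOver (f : A ⟶ B) (y : ExEl P L B) : ExLeOver f (reindex f y) y :=
  ⟨L.pbFst y.g y.hg f, (L.isPB y.g y.hg f).w, le_rfl⟩

theorem exLe_reindex_iff {f : A ⟶ B} {z : ExEl P L A} {y : ExEl P L B} :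
    ExLe z (reindex f y) ↔ ExLeOver f z y := by
  refine ⟨fun h => h.trans_exLeOver (reindex_exLeOver f y), ?_⟩
  rintro ⟨w, hw, hα⟩
  have hpb := L.isPB y.g y.hg f
  refine ⟨hpb.lift w z.g hw, hpb.lift_snd _ _ _, ?_⟩
  dsimp only [reindex]
  rwa [← P.map_comp, hpb.lift_fst]

theorem reindex_mono (f : A ⟶ B) {x y : ExEl P L B} (h : ExLe x y) :
    ExLe (reindex f x) (reindex f y) :=
  exLe_reindex_iff.2 ((reindex_exLeOver f x).trans_exLe h)

end ExistentialCompletion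

/-- Reindexing in the existential completion preserves binary infima and
the top element, up to equivalence in the preorder `P^∃(A)`. -/
theorem reindex_preserves_inf_and_top {A B : C} (f : A ⟶ B) (x y : ExEl P L B) :
    ExEquiv (reindex f (infE x y)) (infE (reindex f x) (reindex f y)) ∧
    ExEquiv (reindex f (topE P L B)) (topE P L A) := by
  refine ⟨⟨?_, ?_⟩, exLe_topE _, exLe_reindex_iff.2 (exLeOver_topE f _)⟩
  · exact exLe_infE (reindex_mono f (infE_exLe_left x y)) (reindex_mono f (infE_exLe_right x y))
  · refine exLe_reindex_iff.2 (exLeOver_infE ?_ ?_)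
    · exact (infE_exLe_left _ _).trans_exLeOver (reindex_exLeOver f x)
    · exact (infE_exLe_right _ _).trans_exLeOver (reindex_exLeOver f y)
end

section
/- For every morphism f : A → B belonging to Λ, the map ∃^e_f : P^∃(A) → P^∃(B) defined by ∃^e_f(h : C → A, α) := (f∘h : C → B, α) is left adjoint to P^∃_f: for all x ∈ P^∃(A) and y ∈ P^∃(B), ∃^e_f(x) ≤ y in P^∃(B) if and only if x ≤ P^∃_f(y) in P^∃(A). -/
open CategoryTheory Limits

universe w v u

variable {C : Type u} [Category.{v} C]

variable {P : PrimaryDoctrine C} {L : LambdaClass C}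

/-- For `f ∈ Λ`, post-composition `∃^e_f` is left adjoint to reindexing `P^∃_f`. -/
theorem existE_adjoint {A B : C} (f : A ⟶ B) (hf : L.mem f)
    (x : ExEl P L A) (y : ExEl P L B) :
    ExLe (existE f hf x) y ↔ ExLe x (reindex f y) := by
  simp only [ExLe, existE, reindex]
  constructor
  · rintro ⟨w, hw, hα⟩
    -- hw : w ≫ y.g = x.g ≫ f
    refine ⟨(L.isPB y.g y.hg f).lift w x.g hw, (L.isPB y.g y.hg f).lift_snd w x.g hw, ?_⟩
    rw [← P.map_comp, (L.isPB y.g y.hg f).lift_fst w x.g hw]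
    exact hα
  · rintro ⟨u, hu, hα⟩
    refine ⟨u ≫ L.pbFst y.g y.hg f, ?_, ?_⟩
    · rw [Category.assoc, (L.isPB y.g y.hg f).w, ← Category.assoc, hu]
    · rw [P.map_comp]
      exact hα
end

section
/- Beck–Chevalley for the existential completion: given a pullback square g∘f' = f∘g' with g' : X' → A', f : A' → A, g : X → A, f' : X' → X, where g (hence g') belongs to Λ, for every element β̄ ∈ P^∃(X) one has ∃^e_{g'}(P^∃_{f'}(β̄)) = P^∃_f(∃^e_g(β̄)) in P^∃(A'). -/
open CategoryTheory Limits

universe w v u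

variable {C : Type u} [Category.{v} C]

variable {P : PrimaryDoctrine C} {L : LambdaClass C}

/-- Beck–Chevalley for the existential completion: given a pullback square
`g' ≫ f = f' ≫ g` with `g, g' ∈ Λ`, one has
`∃^e_{g'}(P^∃_{f'}(β)) = P^∃_f(∃^e_g(β))` in `P^∃(A')`. -/
theorem beck_chevalley_existential_completion
    {X' A' X A : C} (g' : X' ⟶ A') (f' : X' ⟶ X) (f : A' ⟶ A) (g : X ⟶ A)
    (hg : L.mem g) (hg' : L.mem g') (hpb : IsPullback g' f' f g)
    (β : ExEl P L X) :
    ExEquiv (existE g' hg' (reindex f' β)) (reindex f (existE g hg β)) := by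
  -- pullback of β.g along f'
  set p1 := L.pbFst β.g β.hg f' with hp1
  set q1 := L.pbSnd β.g β.hg f' with hq1
  have PB1 : IsPullback p1 q1 β.g f' := L.isPB β.g β.hg f'
  -- pullback of β.g ≫ g along f
  set p2 := L.pbFst (β.g ≫ g) (L.comp_mem β.hg hg) f with hp2
  set q2 := L.pbSnd (β.g ≫ g) (L.comp_mem β.hg hg) f with hq2
  have PB2 : IsPullback p2 q2 (β.g ≫ g) f := L.isPB (β.g ≫ g) (L.comp_mem β.hg hg) f
  constructor
  · -- forward direction
    have hw : p1 ≫ (β.g ≫ g) = (q1 ≫ g') ≫ f := by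
      rw [← Category.assoc, PB1.w, Category.assoc, Category.assoc, hpb.w]
    refine ⟨PB2.lift p1 (q1 ≫ g') hw, PB2.lift_snd _ _ _, ?_⟩
    dsimp only [existE, reindex]
    rw [← P.map_comp, PB2.lift_fst]
    exact le_rfl
  · -- backward direction: first lift into X'
    have hu : q2 ≫ f = (p2 ≫ β.g) ≫ g := by
      rw [← PB2.w, Category.assoc]
    set u := hpb.lift q2 (p2 ≫ β.g) hu with hu'
    have hcone : p2 ≫ β.g = u ≫ f' := (hpb.lift_snd _ _ _).symm
    refine ⟨PB1.lift p2 u hcone, ?_, ?_⟩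
    · dsimp only [existE, reindex]
      rw [← Category.assoc, PB1.lift_snd, hpb.lift_fst]
    · dsimp only [existE, reindex]
      rw [← P.map_comp, PB1.lift_fst]
      exact le_rfl
end

section
/- Frobenius reciprocity for the existential completion: for every morphism f : X → A in Λ, every ᾱ ∈ P^∃(A) and β̄ ∈ P^∃(X), one has ∃^e_f(P^∃_f(ᾱ) ∧ β̄) = ᾱ ∧ ∃^e_f(β̄) in P^∃(A). -/
/-!
The inequality `∃_f(f*a ∧ b) ≤ a ∧ ∃_f b` holds in any fibration of meet-preorders with
`∃_f ⊣ f*`: it is the counit `∃_f f*a ≤ a` together with monotonicity of `∃_f`.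
For the converse, `a ∧ ∃_f b` is carried by the pullback of `a.g` along `b.g ≫ f`, whose
structure map factors through `f` via the second projection. Read over `X` through that
factorisation, it lies below `b` and, by the adjunction, below `f*a`.
-/

open CategoryTheory Limits

universe w v u

variable {C : Type u} [Category.{v} C]

variable {P : PrimaryDoctrine C} {L : LambdaClass C}

theorem ExLe.trans {A : C} {x y z : ExEl P L A} (hxy : ExLe x y) (hyz : ExLe y z) : ExLe x z := by
  obtain ⟨v, hv, hαv⟩ := hxy
  obtain ⟨w, hw, hαw⟩ := hyz
  refine ⟨v ≫ w, by rw [Category.assoc, hw, hv], ?_⟩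
  rw [P.map_comp]
  exact hαv.trans (P.map_mono v hαw)

theorem infE_le_left {A : C} (x y : ExEl P L A) : ExLe (infE x y) x :=
  ⟨L.pbFst x.g x.hg y.g, rfl, inf_le_left⟩

theorem infE_le_right {A : C} (x y : ExEl P L A) : ExLe (infE x y) y :=
  ⟨L.pbSnd x.g x.hg y.g, (L.isPB x.g x.hg y.g).w.symm, inf_le_right⟩

theorem le_infE {A : C} {x y z : ExEl P L A} (hzx : ExLe z x) (hzy : ExLe z y) :
    ExLe z (infE x y) := by
  obtain ⟨u, hu, hαu⟩ := hzx
  obtain ⟨v, hv, hαv⟩ := hzy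
  have hPB := L.isPB x.g x.hg y.g
  have huv : u ≫ x.g = v ≫ y.g := hu.trans hv.symm
  refine ⟨hPB.lift u v huv, by simp only [infE, hPB.lift_fst_assoc, hu], ?_⟩
  simp only [infE, P.map_inf, ← P.map_comp, hPB.lift_fst, hPB.lift_snd]
  exact le_inf hαu hαv

theorem existE_mono {X A : C} (f : X ⟶ A) (hf : L.mem f) {x y : ExEl P L X} (hxy : ExLe x y) :
    ExLe (existE f hf x) (existE f hf y) := by
  obtain ⟨w, hw, hαw⟩ := hxy
  exact ⟨w, by simp only [existE, ← Category.assoc, hw], hαw⟩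

theorem existE_le_iff_le_reindex {X A : C} (f : X ⟶ A) (hf : L.mem f) (x : ExEl P L X)
    (y : ExEl P L A) : ExLe (existE f hf x) y ↔ ExLe x (reindex f y) := by
  have hPB := L.isPB y.g y.hg f
  dsimp only [ExLe, existE, reindex]
  constructor
  · rintro ⟨w, hw, hαw⟩
    refine ⟨hPB.lift w x.g hw, hPB.lift_snd _ _ _, ?_⟩
    rwa [← P.map_comp, hPB.lift_fst]
  · rintro ⟨w, hw, hαw⟩
    refine ⟨w ≫ L.pbFst y.g y.hg f, ?_, ?_⟩
    · rw [Category.assoc, hPB.w, ← Category.assoc, hw]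
    · rwa [P.map_comp]

theorem existE_infE_reindex_le {X A : C} (f : X ⟶ A) (hf : L.mem f) (a : ExEl P L A)
    (b : ExEl P L X) : ExLe (existE f hf (infE (reindex f a) b)) (infE a (existE f hf b)) :=
  le_infE ((existE_le_iff_le_reindex f hf _ a).mpr (infE_le_left _ _))
    (existE_mono f hf (infE_le_right _ _))

theorem infE_existE_le_existE_infE_reindex {X A : C} (f : X ⟶ A) (hf : L.mem f)
    (a : ExEl P L A) (b : ExEl P L X) :
    ExLe (infE a (existE f hf b)) (existE f hf (infE (reindex f a) b)) := by
  let s := infE a (existE f hf b)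
  have hPB := L.isPB a.g a.hg (existE f hf b).g
  let t : ExEl P L X := ⟨s.B, L.pbSnd a.g a.hg (existE f hf b).g ≫ b.g,
    L.comp_mem (L.pbSnd_mem _ _ _) b.hg, s.α⟩
  have hst : ExLe s (existE f hf t) :=
    ⟨𝟙 s.B, (Category.id_comp _).trans (hPB.w.trans (Category.assoc _ _ _).symm).symm,
      (P.map_id _ _).ge⟩
  have hta : ExLe t (reindex f a) := (existE_le_iff_le_reindex f hf t a).mp
    ⟨L.pbFst a.g a.hg (existE f hf b).g, hPB.w.trans (Category.assoc _ _ _).symm, inf_le_left⟩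
  have htb : ExLe t b := ⟨L.pbSnd a.g a.hg (existE f hf b).g, rfl, inf_le_right⟩
  exact hst.trans (existE_mono f hf (le_infE hta htb))

/-- Frobenius reciprocity for the existential completion: for `f : X ⟶ A` in `Λ`,
`∃^e_f(P^∃_f(ᾱ) ⊓ β̄) = ᾱ ⊓ ∃^e_f(β̄)` in `P^∃(A)`. -/
theorem frobenius_existential_completion {X A : C} (f : X ⟶ A) (hf : L.mem f)
    (a : ExEl P L A) (b : ExEl P L X) :
    ExEquiv (existE f hf (infE (reindex f a) b)) (infE a (existE f hf b)) :=
  ⟨existE_infE_reindex_le f hf a b, infE_existE_le_existE_infE_reindex f hf a b⟩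
end

section
/- The unit of the existential completion is a morphism of primary doctrines: for every object A, the map ι_A : P(A) → P^∃(A) sending α to (id_A, α) preserves finite meets (top and binary infima), and ι is natural: for every f : A → B, ι_A ∘ P_f = P^∃_f ∘ ι_B. -/
open CategoryTheory Limits

universe w v u

variable {C : Type u} [Category.{v} C]

variable {P : PrimaryDoctrine C} {L : LambdaClass C}

/-! Each comparison is proved Yoneda-style: both sides have the same elements below them
in the preorder `P^∃(A)`. Below `ι_A α` lie exactly the `(g, γ)` with `γ ≤ P_g α`, below
an `infE` lie the common lower bounds, and below a reindexing `P^∃_f y` lie the `(g, γ)`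
whose `g ≫ f` factors through `y` — this is the pullback property. -/

section ExistentialCompletion

variable {A B : C}

theorem exLe_refl (x : ExEl P L A) : ExLe x x :=
  ⟨𝟙 x.B, Category.id_comp _, (P.map_id _ _).ge⟩

theorem exEquiv_of_forall_exLe_iff {y z : ExEl P L A} (h : ∀ x, ExLe x y ↔ ExLe x z) :
    ExEquiv y z :=
  ⟨(h y).1 (exLe_refl y), (h z).2 (exLe_refl z)⟩

theorem exLe_iota_iff (x : ExEl P L A) (α : P.P A) :
    ExLe x (iota P L A α) ↔ x.α ≤ P.map x.g α := by
  simp only [ExLe, iota, Category.comp_id, exists_eq_left]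

theorem exLe_infE_iff (x y z : ExEl P L A) :
    ExLe x (infE y z) ↔ ExLe x y ∧ ExLe x z := by
  have pb := L.isPB y.g y.hg z.g
  dsimp only [ExLe, infE]
  simp only [P.map_inf, ← P.map_comp, le_inf_iff]
  constructor
  · rintro ⟨w, hw, hle_y, hle_z⟩
    refine ⟨⟨w ≫ L.pbFst y.g y.hg z.g, ?_, hle_y⟩, ⟨w ≫ L.pbSnd y.g y.hg z.g, ?_, hle_z⟩⟩
    · rwa [Category.assoc]
    · rwa [Category.assoc, ← pb.w]
  · rintro ⟨⟨u, hu, hle_u⟩, ⟨v, hv, hle_v⟩⟩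
    refine ⟨pb.lift u v (hu.trans hv.symm), ?_, ?_, ?_⟩
    · rw [pb.lift_fst_assoc, hu]
    · rwa [pb.lift_fst]
    · rwa [pb.lift_snd]

theorem exLe_reindex_iff_s10 (f : A ⟶ B) (x : ExEl P L A) (y : ExEl P L B) :
    ExLe x (reindex f y) ↔ ∃ w : x.B ⟶ y.B, w ≫ y.g = x.g ≫ f ∧ x.α ≤ P.map w y.α := by
  have pb := L.isPB y.g y.hg f
  dsimp only [ExLe, reindex]
  constructor
  · rintro ⟨w, hw, hle⟩
    refine ⟨w ≫ L.pbFst y.g y.hg f, ?_, ?_⟩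
    · rw [Category.assoc, pb.w, ← hw, Category.assoc]
    · rwa [P.map_comp]
  · rintro ⟨w, hw, hle⟩
    refine ⟨pb.lift w x.g hw, pb.lift_snd _ _ _, ?_⟩
    rwa [← P.map_comp, pb.lift_fst]

theorem exLe_reindex_iota_iff (f : A ⟶ B) (x : ExEl P L A) (α : P.P B) :
    ExLe x (reindex f (iota P L B α)) ↔ x.α ≤ P.map (x.g ≫ f) α := by
  simp only [exLe_reindex_iff_s10, iota, Category.comp_id, exists_eq_left]

end ExistentialCompletion

theorem iota_morphism_of_primary_doctrines_general :
    (∀ A : C, ExEquiv (iota P L A ⊤) (topE P L A)) ∧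
    (∀ (A : C) (α β : P.P A),
      ExEquiv (iota P L A (α ⊓ β)) (infE (iota P L A α) (iota P L A β))) ∧
    (∀ {A B : C} (f : A ⟶ B) (α : P.P B),
      ExEquiv (iota P L A (P.map f α)) (reindex f (iota P L B α))) := by
  refine ⟨fun A => ⟨exLe_refl _, exLe_refl _⟩, fun A α β => ?_, fun f α => ?_⟩
  · refine exEquiv_of_forall_exLe_iff fun x => ?_
    rw [exLe_infE_iff, exLe_iota_iff, exLe_iota_iff, exLe_iota_iff, P.map_inf, le_inf_iff]
  · refine exEquiv_of_forall_exLe_iff fun x => ?_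
    rw [exLe_reindex_iota_iff, exLe_iota_iff, P.map_comp]

/-- The unit `ι` of the existential completion is a morphism of primary doctrines:
each `ι_A` preserves the top element and binary infima, and `ι` is natural. -/
theorem iota_morphism_of_primary_doctrines [HasFiniteProducts C]
    (hproj : ∀ A B : C, L.mem (prod.fst : A ⨯ B ⟶ A)) :
    (∀ A : C, ExEquiv (iota P L A ⊤) (topE P L A)) ∧
    (∀ (A : C) (α β : P.P A),
      ExEquiv (iota P L A (α ⊓ β)) (infE (iota P L A α) (iota P L A β))) ∧
    (∀ {A B : C} (f : A ⟶ B) (α : P.P B),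
      ExEquiv (iota P L A (P.map f α)) (reindex f (iota P L B α))) :=
  iota_morphism_of_primary_doctrines_general
end

section
/- If P is an existential doctrine, the map ζ_A : P^∃(A) → P(A) sending (f : C → A, α) to ∃_f(α) is monotone and natural in A: for every g : A → B, P_g ∘ ζ_B = ζ_A ∘ P^∃_g; naturality is equivalent to the Beck–Chevalley condition for P. -/
open CategoryTheory Limits

universe w v u

variable {C : Type u} [Category.{v} C]

variable {P : PrimaryDoctrine C} {L : LambdaClass C}

/-- If `P` is existential (has left adjoints `∃_f ⊣ P_f` along `f ∈ Λ` satisfying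
Beck–Chevalley), then `ζ_A : P^∃(A) → P(A)`, `(f, α) ↦ ∃_f(α)`, is monotone and
natural in `A`. -/
theorem zeta_monotone_natural
    (ex : ∀ {X A : C} (f : X ⟶ A), L.mem f → P.P X → P.P A)
    (adj : ∀ {X A : C} (f : X ⟶ A) (hf : L.mem f) (α : P.P X) (β : P.P A),
      ex f hf α ≤ β ↔ α ≤ P.map f β)
    (BC : ∀ {X' A' X A : C} (g' : X' ⟶ A') (f' : X' ⟶ X) (f : A' ⟶ A) (g : X ⟶ A)
      (hg : L.mem g) (hg' : L.mem g'), IsPullback g' f' f g →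
      ∀ α : P.P X, ex g' hg' (P.map f' α) = P.map f (ex g hg α)) :
    (∀ {A : C} (x y : ExEl P L A), ExLe x y → ex x.g x.hg x.α ≤ ex y.g y.hg y.α) ∧
    (∀ {A B : C} (g : A ⟶ B) (x : ExEl P L B),
      P.map g (ex x.g x.hg x.α) =
        ex (reindex g x).g (reindex g x).hg (reindex g x).α) := by
  constructor
  · intro A x y ⟨w, hw, hle⟩
    rw [adj]
    calc x.α ≤ P.map w y.α := hle
      _ ≤ P.map w (P.map y.g (ex y.g y.hg y.α)) :=
        P.map_mono w ((adj y.g y.hg y.α _).mp le_rfl)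
      _ = P.map x.g (ex y.g y.hg y.α) := by rw [← P.map_comp, hw]
  · intro A B g x
    exact (BC _ _ g x.g x.hg (L.pbSnd_mem x.g x.hg g) (L.isPB x.g x.hg g).flip x.α).symm
end

section
/- For every primary doctrine P, the composite ζ_{P^∃} ∘ (ι applied inside P^∃) is the identity: for every A and x = (g : C → A, α) in P^∃(A), applying the counit of P^∃∃ to ι_{P^∃, A}(x) = (id_A, x) yields ∃^e_{id_A}(x) = x. Hence ε_{E(P)} ∘ E(η_P) = id. -/
open CategoryTheory Limits

universe w v u

variable {C : Type u} [Category.{v} C]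

variable {P : PrimaryDoctrine C} {L : LambdaClass C}

/-- The counit applied to the unit is the identity: `∃^e_{id_A}(x) = x`
for every `x ∈ P^∃(A)`; hence `ε_{E(P)} ∘ E(η_P) = id`. -/
theorem counit_unit_identity {A : C} (x : ExEl P L A) :
    existE (𝟙 A) (L.id_mem A) x = x := by
  cases x; simp [existE]
end

section
/- Let (P, a) be a strict algebra for the existential-completion monad: a : P^∃ → P is a natural transformation over the identity functor with a_A ∘ ι_A = id_{P(A)} for all A. Then for every projection f : A → B, the map ∃_f(α) := a_B(f, α) is left adjoint to P_f: ∃_f(α) ≤ β iff α ≤ P_f(β). -/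
open CategoryTheory Limits

universe w v u

variable {C : Type u} [Category.{v} C]

variable {P : PrimaryDoctrine C} {L : LambdaClass C}

/-!
`α ↦ a_B(f, α)` is monotone, so it suffices to give the unit and the counit of the adjunction.
Unit: the diagonal of the kernel pair `A ×_B A` of `f` gives `ι_A α ≤ P^∃_f (f, α)`; apply `a_A`,
then naturality and `a ∘ ι = id`. Counit: `f` itself witnesses `(f, P_f β) ≤ ι_B β`; apply `a_B`.
-/

lemma exLe_mk_of_le {A B : C} (f : A ⟶ B) (hf : L.mem f) {α α' : P.P A} (h : α ≤ α') :
    ExLe (⟨A, f, hf, α⟩ : ExEl P L B) ⟨A, f, hf, α'⟩ :=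
  ⟨𝟙 A, Category.id_comp f, by rwa [P.map_id]⟩

lemma exLe_iota_of_le_map {A B : C} (f : A ⟶ B) (hf : L.mem f) {α : P.P A} {β : P.P B}
    (h : α ≤ P.map f β) : ExLe (⟨A, f, hf, α⟩ : ExEl P L B) (iota P L B β) :=
  ⟨f, Category.comp_id f, h⟩

lemma iota_exLe_reindex_self {A B : C} (f : A ⟶ B) (hf : L.mem f) (α : P.P A) :
    ExLe (iota P L A α) (reindex f (⟨A, f, hf, α⟩ : ExEl P L B)) := by
  have hpb := L.isPB f hf f
  let diag : A ⟶ L.pbObj f hf f := hpb.lift (𝟙 A) (𝟙 A) rfl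
  refine ⟨diag, hpb.lift_snd _ _ rfl, ?_⟩
  change α ≤ P.map diag (P.map (L.pbFst f hf f) α)
  rw [← P.map_comp, hpb.lift_fst, P.map_id]

lemma le_map_algebra_mk (a : ∀ A : C, ExEl P L A → P.P A)
    (hmono : ∀ {A : C} (x y : ExEl P L A), ExLe x y → a A x ≤ a A y)
    (hnat : ∀ {A B : C} (f : A ⟶ B) (x : ExEl P L B),
      P.map f (a B x) = a A (reindex f x))
    (hunit : ∀ {A : C} (α : P.P A), a A (iota P L A α) = α)
    {A B : C} (f : A ⟶ B) (hf : L.mem f) (α : P.P A) :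
    α ≤ P.map f (a B ⟨A, f, hf, α⟩) :=
  calc α = a A (iota P L A α) := (hunit α).symm
    _ ≤ a A (reindex f ⟨A, f, hf, α⟩) := hmono _ _ (iota_exLe_reindex_self f hf α)
    _ = P.map f (a B ⟨A, f, hf, α⟩) := (hnat f _).symm

lemma algebra_mk_map_le (a : ∀ A : C, ExEl P L A → P.P A)
    (hmono : ∀ {A : C} (x y : ExEl P L A), ExLe x y → a A x ≤ a A y)
    (hunit : ∀ {A : C} (α : P.P A), a A (iota P L A α) = α)
    {A B : C} (f : A ⟶ B) (hf : L.mem f) (β : P.P B) :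
    a B ⟨A, f, hf, P.map f β⟩ ≤ β :=
  calc a B ⟨A, f, hf, P.map f β⟩ ≤ a B (iota P L B β) :=
        hmono _ _ (exLe_iota_of_le_map f hf le_rfl)
    _ = β := hunit β

theorem algebra_gives_left_adjoint_general
    (a : ∀ A : C, ExEl P L A → P.P A)
    (hmono : ∀ {A : C} (x y : ExEl P L A), ExLe x y → a A x ≤ a A y)
    (hnat : ∀ {A B : C} (f : A ⟶ B) (x : ExEl P L B),
      P.map f (a B x) = a A (reindex f x))
    (hunit : ∀ {A : C} (α : P.P A), a A (iota P L A α) = α)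
    {A B : C} (f : A ⟶ B) (hf : L.mem f) (α : P.P A) (β : P.P B) :
    a B ⟨A, f, hf, α⟩ ≤ β ↔ α ≤ P.map f β :=
  GaloisConnection.monotone_intro (P.map_mono f)
    (fun _ _ h => hmono _ _ (exLe_mk_of_le f hf h))
    (le_map_algebra_mk a hmono hnat hunit f hf) (algebra_mk_map_le a hmono hunit f hf) α β

/-- If `(P, a)` is a strict algebra for the existential-completion monad
(`a : P^∃ → P` monotone, natural over the identity, with `a ∘ ι = id`),
then for every projection `f` (morphism of `Λ`), `∃_f(α) := a_B(f, α)` is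
left adjoint to `P_f`. -/
theorem algebra_gives_left_adjoint [HasFiniteProducts C]
    (hproj : ∀ A B : C, L.mem (prod.fst : A ⨯ B ⟶ A))
    (a : ∀ A : C, ExEl P L A → P.P A)
    (hmono : ∀ {A : C} (x y : ExEl P L A), ExLe x y → a A x ≤ a A y)
    (hnat : ∀ {A B : C} (f : A ⟶ B) (x : ExEl P L B),
      P.map f (a B x) = a A (reindex f x))
    (hunit : ∀ {A : C} (α : P.P A), a A (iota P L A α) = α)
    {A B : C} (f : A ⟶ B) (hf : L.mem f) (α : P.P A) (β : P.P B) :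
    a B ⟨A, f, hf, α⟩ ≤ β ↔ α ≤ P.map f β :=
  algebra_gives_left_adjoint_general a hmono hnat hunit f hf α β
end

section
/- Under the hypotheses of the algebra-to-existential construction, the left adjoints ∃_f(α) := a_B(f, α) satisfy the Beck–Chevalley condition: for any pullback square with projections g : X → A and g' : X' → A' and morphisms f : A' → A, f' : X' → X, one has ∃_{g'}(P_{f'}(α)) = P_f(∃_g(α)) for all α ∈ P(X). -/
open CategoryTheory Limits

universe w v u

variable {C : Type u} [Category.{v} C]

variable {P : PrimaryDoctrine C} {L : LambdaClass C}

/-! Reindexing in `P^∃` through the chosen pullback and through any other pullback gives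
equivalent elements, since the two pullbacks map into each other over the cospan. A monotone `a`
is constant on equivalence classes, and naturality turns `P_f ∘ a` into `a ∘ reindex f`. -/

theorem exLe_of_isPullback {Q Q' X A' A : C} {q₂ : Q ⟶ A'} {q₁ : Q ⟶ X} {q₂' : Q' ⟶ A'}
    {q₁' : Q' ⟶ X} {f : A' ⟶ A} {g : X ⟶ A} (hq₂ : L.mem q₂) (hq₂' : L.mem q₂')
    (hQ : q₂ ≫ f = q₁ ≫ g) (hQ' : IsPullback q₂' q₁' f g) (α : P.P X) :
    ExLe (⟨Q, q₂, hq₂, P.map q₁ α⟩ : ExEl P L A') ⟨Q', q₂', hq₂', P.map q₁' α⟩ :=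
  ⟨hQ'.lift q₂ q₁ hQ, hQ'.lift_fst _ _ _, by rw [← P.map_comp, hQ'.lift_snd]⟩

theorem exEquiv_reindex_of_isPullback {X' A' X A : C} {g' : X' ⟶ A'} {f' : X' ⟶ X}
    {f : A' ⟶ A} {g : X ⟶ A} (hg : L.mem g) (hg' : L.mem g') (hpb : IsPullback g' f' f g)
    (α : P.P X) :
    ExEquiv (⟨X', g', hg', P.map f' α⟩ : ExEl P L A') (reindex f ⟨X, g, hg, α⟩) :=
  have hchosen := (L.isPB g hg f).flip
  ⟨exLe_of_isPullback hg' (L.pbSnd_mem g hg f) hpb.w hchosen α,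
    exLe_of_isPullback (L.pbSnd_mem g hg f) hg' hchosen.w hpb α⟩

theorem eq_of_exEquiv {A : C} {T : Type*} [PartialOrder T] {a : ExEl P L A → T}
    (hmono : ∀ x y, ExLe x y → a x ≤ a y) {x y : ExEl P L A} (hxy : ExEquiv x y) :
    a x = a y :=
  le_antisymm (hmono x y hxy.1) (hmono y x hxy.2)

theorem algebra_beck_chevalley_general
    (a : ∀ A : C, ExEl P L A → P.P A)
    (hmono : ∀ {A : C} (x y : ExEl P L A), ExLe x y → a A x ≤ a A y)
    (hnat : ∀ {A B : C} (f : A ⟶ B) (x : ExEl P L B),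
      P.map f (a B x) = a A (reindex f x))
    {X' A' X A : C} (g' : X' ⟶ A') (f' : X' ⟶ X) (f : A' ⟶ A) (g : X ⟶ A)
    (hg : L.mem g) (hg' : L.mem g') (hpb : IsPullback g' f' f g) (α : P.P X) :
    a A' ⟨X', g', hg', P.map f' α⟩ = P.map f (a A ⟨X, g, hg, α⟩) := by
  rw [hnat]
  exact eq_of_exEquiv hmono (exEquiv_reindex_of_isPullback hg hg' hpb α)

/-- For a strict algebra `(P, a)` of the existential-completion monad, the
induced adjoints `∃_f(α) := a(f, α)` satisfy the Beck–Chevalley condition. -/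
theorem algebra_beck_chevalley [HasFiniteProducts C]
    (hproj : ∀ A B : C, L.mem (prod.fst : A ⨯ B ⟶ A))
    (a : ∀ A : C, ExEl P L A → P.P A)
    (hmono : ∀ {A : C} (x y : ExEl P L A), ExLe x y → a A x ≤ a A y)
    (hnat : ∀ {A B : C} (f : A ⟶ B) (x : ExEl P L B),
      P.map f (a B x) = a A (reindex f x))
    (hunit : ∀ {A : C} (α : P.P A), a A (iota P L A α) = α)
    {X' A' X A : C} (g' : X' ⟶ A') (f' : X' ⟶ X) (f : A' ⟶ A) (g : X ⟶ A)
    (hg : L.mem g) (hg' : L.mem g') (hpb : IsPullback g' f' f g) (α : P.P X) :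
    a A' ⟨X', g', hg', P.map f' α⟩ = P.map f (a A ⟨X, g, hg, α⟩) :=
  algebra_beck_chevalley_general a hmono hnat g' f' f g hg hg' hpb α
end
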